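/- arXiv:0805.0007 — 2 statements merged into one kernel-verified Lean document; each statement's English description precedes it below -/
import Mathlib

section
/- For any vector (x_1,...,x_d) ∈ ℂ^d there exist signs θ_1,...,θ_d ∈ {−1,+1} such that |∑_{k=1}^d θ_k x_k| ≥ (2/π) ∑_{k=1}^d |x_k|. -/
/-!
Average over the direction `φ ∈ [0, 2π]`: since `∫₀^{2π} |cos| = 4`, the mean of
`∑ₖ |Re (e^{iφ} xₖ)|` is `(2/π) ∑ₖ |xₖ|`, and by the mean value theorem for integrals some `φ`
attains it. Taking `θₖ` to be the sign of `Re (e^{iφ} xₖ)` then gives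
`∑ₖ |Re (e^{iφ} xₖ)| = Re (e^{iφ} ∑ₖ θₖ xₖ) ≤ |∑ₖ θₖ xₖ|`.
-/

open Real intervalIntegral

lemma abs_cos_periodic : Function.Periodic (fun t => |cos t|) π := by
  intro t
  simp [cos_add_pi]

lemma integral_abs_cos_zero_two_pi : ∫ t in (0 : ℝ)..2 * π, |cos t| = 4 := by
  have hint : ∀ a b : ℝ, IntervalIntegrable (fun t => |cos t|) MeasureTheory.volume a b :=
    fun _ _ => continuous_cos.abs.intervalIntegrable _ _
  have half_period : ∫ t in (-(π / 2))..π / 2, |cos t| = 2 := by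
    rw [integral_congr (g := cos) fun t ht => abs_of_nonneg (cos_nonneg_of_mem_Icc
      (by rwa [Set.uIcc_of_le (by linarith [pi_pos])] at ht))]
    simp only [integral_cos, sin_pi_div_two, sin_neg, sub_neg_eq_add]
    norm_num
  calc ∫ t in (0 : ℝ)..2 * π, |cos t|
      = ∫ t in (0 : ℝ)..0 + (2 : ℤ) • π, |cos t| := by norm_num
    _ = 2 * ∫ t in (-(π / 2))..-(π / 2) + π, |cos t| := by
        rw [abs_cos_periodic.intervalIntegral_add_zsmul_eq 2 0 hint,
          abs_cos_periodic.intervalIntegral_add_eq 0 (-(π / 2))]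
        simp
    _ = 4 := by
        rw [show -(π / 2) + π = π / 2 by ring, half_period]
        norm_num

lemma re_exp_mul_I_mul (φ : ℝ) (z : ℂ) :
    (Complex.exp (φ * Complex.I) * z).re = ‖z‖ * cos (φ + z.arg) := by
  conv_lhs => rw [← Complex.norm_mul_exp_arg_mul_I z]
  rw [mul_left_comm, ← Complex.exp_add, ← add_mul, ← Complex.ofReal_add,
    Complex.re_ofReal_mul, Complex.exp_ofReal_mul_I_re]

lemma integral_abs_re_exp_mul_I_mul (z : ℂ) :
    ∫ φ in (0 : ℝ)..2 * π, |(Complex.exp (φ * Complex.I) * z).re| = 4 * ‖z‖ := by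
  have hper : Function.Periodic (fun t => |cos t|) (2 * π) := by
    simpa [two_mul, add_assoc] using abs_cos_periodic.add_period abs_cos_periodic
  simp_rw [re_exp_mul_I_mul, abs_mul, abs_norm]
  rw [integral_const_mul, integral_comp_add_right (fun t => |cos t|), zero_add, add_comm,
    hper.intervalIntegral_add_eq z.arg 0, zero_add, integral_abs_cos_zero_two_pi, mul_comm]

lemma exists_signs_sum_abs_re_le_norm_sum {ι : Type*} [Fintype ι] (y : ι → ℂ) :
    ∃ θ : ι → ℝ, (∀ k, θ k = 1 ∨ θ k = -1) ∧ ∑ k, |(y k).re| ≤ ‖∑ k, (θ k : ℂ) * y k‖ := by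
  set θ : ι → ℝ := fun k => if 0 ≤ (y k).re then 1 else -1
  have hθ : ∀ k, θ k * (y k).re = |(y k).re| := fun k => by
    by_cases h : 0 ≤ (y k).re
    · simp [θ, h, abs_of_nonneg h]
    · simp [θ, h, abs_of_neg (not_le.mp h)]
  refine ⟨θ, fun k => by by_cases h : 0 ≤ (y k).re <;> simp [θ, h], ?_⟩
  calc ∑ k, |(y k).re| = (∑ k, (θ k : ℂ) * y k).re := by
        simp only [Complex.re_sum, Complex.re_ofReal_mul, hθ]
    _ ≤ ‖∑ k, (θ k : ℂ) * y k‖ := Complex.re_le_norm _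

/-- For any vector `(x_1,...,x_d) ∈ ℂ^d` there exist signs `θ_k ∈ {±1}` with
`|∑ θ_k x_k| ≥ (2/π) ∑ |x_k|`. -/
theorem signs_approximate_complex_sum {d : ℕ} (x : Fin d → ℂ) :
    ∃ θ : Fin d → ℝ, (∀ k, θ k = 1 ∨ θ k = -1) ∧
      (2 / Real.pi) * ∑ k, ‖x k‖ ≤ ‖∑ k, (θ k : ℂ) * x k‖ := by
  set F : ℝ → ℝ := fun φ => ∑ k, |(Complex.exp (φ * Complex.I) * x k).re|
  have hF : Continuous F := by fun_prop
  obtain ⟨φ, -, hφ⟩ := exists_eq_interval_average two_pi_pos.ne hF.continuousOn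
  have haverage : ⨍ t in (0 : ℝ)..2 * π, F t = 2 / π * ∑ k, ‖x k‖ := by
    rw [interval_average_eq_div,
      integral_finsetSum fun k _ => Continuous.intervalIntegrable (by fun_prop) _ _]
    simp only [integral_abs_re_exp_mul_I_mul, ← Finset.mul_sum]
    field_simp
    ring
  obtain ⟨θ, hθ, hle⟩ :=
    exists_signs_sum_abs_re_le_norm_sum fun k => Complex.exp (φ * Complex.I) * x k
  refine ⟨θ, hθ, ?_⟩
  calc 2 / π * ∑ k, ‖x k‖ = F φ := by rw [hφ, haverage]
    _ ≤ ‖∑ k, (θ k : ℂ) * (Complex.exp (φ * Complex.I) * x k)‖ := hle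
    _ = ‖∑ k, (θ k : ℂ) * x k‖ := by
        simp_rw [mul_left_comm _ (Complex.exp _), ← Finset.mul_sum, norm_mul,
          Complex.norm_exp_ofReal_mul_I, one_mul]
end

section
/- Let |ψ⟩ be a random unit vector in a subspace V ⊆ ℂ^N with E[|⟨g|ψ⟩|²] = 1/N and E[|⟨g|ψ⟩|⁴] ≤ 2/N² for every computational basis vector |g⟩, g ∈ {1,...,N}. Then E[∑_{g=1}^N |⟨g|ψ⟩|] ≥ √N / √2, and hence there exists a unit vector |ψ⟩ ∈ V with ∑_g |⟨g|ψ⟩| ≥ √N / √2. -/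
open Matrix MeasureTheory

/-! For `Y = |⟨g|ψ⟩| ≥ 0` and every `t ≥ 0` one has `3 t² Y² ≤ 2 t³ Y + Y⁴`
(the difference is `Y (Y - t)² (Y + 2t)`). Taking expectations and optimising in `t` gives
`E[Y²]³ ≤ E[Y]² E[Y⁴]`, hence `E[Y] ≥ √(1/(2N))` for each of the `N` coordinates; summing gives
the bound on the mean, and the first moment method turns it into a unit vector of `V`. -/

theorem norm_apply_le_one_of_star_dotProduct_self_eq_one {𝕜 ι : Type*} [RCLike 𝕜] [Fintype ι]
    {v : ι → 𝕜} (hv : star v ⬝ᵥ v = 1) (i : ι) : ‖v i‖ ≤ 1 := by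
  have hnorm : ‖WithLp.toLp 2 v‖ = 1 := by
    have h := inner_self_eq_norm_sq (𝕜 := 𝕜) (WithLp.toLp 2 v)
    rw [EuclideanSpace.inner_toLp_toLp, dotProduct_comm, hv, RCLike.one_re] at h
    nlinarith [norm_nonneg (WithLp.toLp 2 v)]
  simpa [hnorm] using PiLp.norm_apply_le (WithLp.toLp 2 v) i

theorem three_mul_sq_mul_sq_le {y t : ℝ} (hy : 0 ≤ y) (ht : 0 ≤ t) :
    3 * t ^ 2 * y ^ 2 ≤ 2 * t ^ 3 * y + y ^ 4 := by
  nlinarith [mul_nonneg (mul_nonneg hy (sq_nonneg (y - t))) (by positivity : 0 ≤ y + 2 * t)]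

theorem cube_le_sq_mul_of_forall_le {a b c : ℝ} (ha : 0 ≤ a) (hb : 0 ≤ b)
    (h : ∀ t ≥ 0, 3 * t ^ 2 * a ≤ 2 * t ^ 3 * b + c) : a ^ 3 ≤ b ^ 2 * c := by
  rcases hb.eq_or_lt with rfl | hb
  -- for `b = 0` the bound `3 t² a ≤ c` for all `t` forces `a = 0`
  · have hc : 0 ≤ c := by simpa using h 0 le_rfl
    rcases ha.eq_or_lt with rfl | ha
    · simp
    have ht : 0 ≤ 1 + (c + 1) / a := by positivity
    have hta : (1 + (c + 1) / a) * a = a + c + 1 := by field_simp; ring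
    nlinarith [h _ ht]
  -- `t = a / b` is the optimal choice
  · have := h (a / b) (by positivity)
    field_simp at this
    nlinarith

section Moments

variable {Ω : Type*} [MeasurableSpace Ω] {μ : Measure Ω} {Y : Ω → ℝ}

theorem integrable_sq_of_integrable_pow_four (hY : Integrable Y μ)
    (hY4 : Integrable (fun ω => Y ω ^ 4) μ) : Integrable (fun ω => Y ω ^ 2) μ := by
  refine (hY.abs.add hY4).mono' (hY.aestronglyMeasurable.pow 2) (.of_forall fun ω => ?_)
  rw [Pi.add_apply, Real.norm_of_nonneg (sq_nonneg _), ← sq_abs,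
    ← Even.pow_abs (by decide : Even 4)]
  have ha := abs_nonneg (Y ω)
  nlinarith [mul_nonneg ha (sq_nonneg (|Y ω| - 1)), sq_nonneg (|Y ω| * (|Y ω| - 1)),
    pow_nonneg ha 3]

theorem integral_sq_pow_three_le (hY0 : 0 ≤ᵐ[μ] Y) (hY : Integrable Y μ)
    (hY4 : Integrable (fun ω => Y ω ^ 4) μ) :
    (∫ ω, Y ω ^ 2 ∂μ) ^ 3 ≤ (∫ ω, Y ω ∂μ) ^ 2 * ∫ ω, Y ω ^ 4 ∂μ := by
  refine cube_le_sq_mul_of_forall_le (integral_nonneg fun ω => sq_nonneg _)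
    (integral_nonneg_of_ae hY0) fun t ht => ?_
  rw [← integral_const_mul, ← integral_const_mul, ← integral_add (hY.const_mul _) hY4]
  refine integral_mono_ae ((integrable_sq_of_integrable_pow_four hY hY4).const_mul _)
    ((hY.const_mul _).add hY4) ?_
  filter_upwards [hY0] with ω hω
  exact three_mul_sq_mul_sq_le hω ht

end Moments

section RandomUnitVector

variable {𝕜 ι : Type*} [RCLike 𝕜] [Fintype ι] {μ : Measure (ι → 𝕜)}

theorem integrable_norm_apply_pow [IsFiniteMeasure μ] (hunit : ∀ᵐ ψ ∂μ, star ψ ⬝ᵥ ψ = 1)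
    (i : ι) (n : ℕ) : Integrable (fun ψ => ‖ψ i‖ ^ n) μ := by
  refine .of_bound ((measurable_pi_apply i).norm.pow_const n).aestronglyMeasurable 1 ?_
  filter_upwards [hunit] with ψ hψ
  rw [norm_pow, norm_norm]
  exact pow_le_one₀ (norm_nonneg _) (norm_apply_le_one_of_star_dotProduct_self_eq_one hψ i)

theorem sqrt_one_div_two_mul_le_integral_norm_apply {N : ℕ} {μ : Measure (Fin N → 𝕜)}
    [IsFiniteMeasure μ] (hunit : ∀ᵐ ψ ∂μ, star ψ ⬝ᵥ ψ = 1) (g : Fin N)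
    (h2 : ∫ ψ, ‖ψ g‖ ^ 2 ∂μ = 1 / N) (h4 : ∫ ψ, ‖ψ g‖ ^ 4 ∂μ ≤ 2 / (N : ℝ) ^ 2) :
    Real.sqrt (1 / (2 * N)) ≤ ∫ ψ, ‖ψ g‖ ∂μ := by
  have hN : (0 : ℝ) < N := by exact_mod_cast g.pos
  have h0 : 0 ≤ᵐ[μ] fun ψ => ‖ψ g‖ := ae_of_all _ fun ψ => norm_nonneg (ψ g)
  have h1 : Integrable (fun ψ => ‖ψ g‖) μ := by simpa using integrable_norm_apply_pow hunit g 1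
  have hmoments := integral_sq_pow_three_le h0 h1 (integrable_norm_apply_pow hunit g 4)
  rw [h2] at hmoments
  have hbound : (1 / (N : ℝ)) ^ 3 ≤ (∫ ψ, ‖ψ g‖ ∂μ) ^ 2 * (2 / (N : ℝ) ^ 2) :=
    hmoments.trans (by gcongr)
  have hmean : 0 ≤ ∫ ψ, ‖ψ g‖ ∂μ := integral_nonneg_of_ae h0
  generalize ∫ ψ, ‖ψ g‖ ∂μ = b at hmean hbound ⊢
  refine Real.sqrt_le_iff.mpr ⟨hmean, ?_⟩
  field_simp at hbound ⊢
  nlinarith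

end RandomUnitVector

theorem sqrt_div_sqrt_two_eq_mul_sqrt (N : ℕ) :
    Real.sqrt N / Real.sqrt 2 = N * Real.sqrt (1 / (2 * N)) := by
  rcases N.eq_zero_or_pos with rfl | hN
  · simp
  rw [one_div, Real.sqrt_inv, Real.sqrt_mul zero_le_two]
  field_simp
  exact Real.sq_sqrt (Nat.cast_nonneg N)

theorem l1_norm_lower_bound_general {N : ℕ} (V : Submodule ℂ (Fin N → ℂ))
    (μ : Measure (Fin N → ℂ)) [IsProbabilityMeasure μ]
    (hsupp : ∀ᵐ ψ ∂μ, ψ ∈ V ∧ star ψ ⬝ᵥ ψ = 1)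
    (h2 : ∀ g : Fin N, ∫ ψ, (‖ψ g‖) ^ 2 ∂μ = 1 / N)
    (h4 : ∀ g : Fin N, ∫ ψ, (‖ψ g‖) ^ 4 ∂μ ≤ 2 / (N : ℝ) ^ 2) :
    Real.sqrt N / Real.sqrt 2 ≤ ∫ ψ, ∑ g, ‖ψ g‖ ∂μ ∧
      ∃ ψ ∈ V, star ψ ⬝ᵥ ψ = 1 ∧
        Real.sqrt N / Real.sqrt 2 ≤ ∑ g, ‖ψ g‖ := by
  have hunit : ∀ᵐ ψ ∂μ, star ψ ⬝ᵥ ψ = 1 := hsupp.mono fun _ h => h.2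
  have hint (g : Fin N) : Integrable (fun ψ => ‖ψ g‖) μ := by
    simpa using integrable_norm_apply_pow hunit g 1
  have hmean : Real.sqrt N / Real.sqrt 2 ≤ ∫ ψ, ∑ g, ‖ψ g‖ ∂μ := by
    rw [integral_finsetSum _ fun g _ => hint g, sqrt_div_sqrt_two_eq_mul_sqrt]
    simpa using Finset.card_nsmul_le_sum Finset.univ _ _ fun g _ =>
      sqrt_one_div_two_mul_le_integral_norm_apply hunit g (h2 g) (h4 g)
  obtain ⟨ψ, hψ, hle⟩ := exists_notMem_null_integral_le
    (integrable_finsetSum _ fun g _ => hint g) (ae_iff.mp hsupp)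
  rw [Set.mem_ofPred_eq, not_not] at hψ
  exact ⟨hmean, ψ, hψ.1, hψ.2, hmean.trans hle⟩

/-- If `ψ` is a random unit vector in a subspace `V ⊆ ℂ^N` with
`E[|⟨g|ψ⟩|²] = 1/N` and `E[|⟨g|ψ⟩|⁴] ≤ 2/N²` for every computational basis vector `g`,
then `E[∑_g |⟨g|ψ⟩|] ≥ √N/√2`, and hence some unit vector `ψ ∈ V` has
`∑_g |⟨g|ψ⟩| ≥ √N/√2`. -/
theorem l1_norm_lower_bound {N : ℕ} (hN : 0 < N) (V : Submodule ℂ (Fin N → ℂ))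
    (μ : Measure (Fin N → ℂ)) [IsProbabilityMeasure μ]
    (hsupp : ∀ᵐ ψ ∂μ, ψ ∈ V ∧ star ψ ⬝ᵥ ψ = 1)
    (hInt : Integrable (fun ψ => ∑ g, ‖ψ g‖) μ)
    (h2 : ∀ g : Fin N, ∫ ψ, (‖ψ g‖) ^ 2 ∂μ = 1 / N)
    (h4 : ∀ g : Fin N, ∫ ψ, (‖ψ g‖) ^ 4 ∂μ ≤ 2 / (N : ℝ) ^ 2) :
    Real.sqrt N / Real.sqrt 2 ≤ ∫ ψ, ∑ g, ‖ψ g‖ ∂μ ∧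
      ∃ ψ ∈ V, star ψ ⬝ᵥ ψ = 1 ∧
        Real.sqrt N / Real.sqrt 2 ≤ ∑ g, ‖ψ g‖ :=
  l1_norm_lower_bound_general V μ hsupp h2 h4
end
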